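/- Let X be a metrizable compact Hausdorff space and Φ ∈ C(O(X)). Then the functions O(O(X)) → ℝ defined by M ↦ sup{M(π_φ) : φ ∈ C(X), π_φ ≤ Φ pointwise on O(X)} and M ↦ inf{M(π_φ) : φ ∈ C(X), π_φ ≥ Φ pointwise on O(X)} are continuous. -/

import Mathlib

/-- The set of normed, weakly additive, order-preserving functionals on `C(X, ℝ)`. -/
def OF (X : Type*) [TopologicalSpace X] : Set (C(X, ℝ) → ℝ) :=
  {ν | ν 1 = 1 ∧ (∀ (φ : C(X, ℝ)) (c : ℝ), ν (φ + ContinuousMap.const X c) = ν φ + c) ∧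
    ∀ φ ψ : C(X, ℝ), φ ≤ ψ → ν φ ≤ ν ψ}

/-- For `φ ∈ C(X, ℝ)`, the evaluation map `π_φ : O(X) → ℝ`. -/
def piO (X : Type*) [TopologicalSpace X] (φ : C(X, ℝ)) : C(↥(OF X), ℝ) :=
  ⟨fun ν => ν.1 φ, (continuous_apply φ).comp continuous_subtype_val⟩

/-- The monad multiplication `μ_O X : O(O(X)) → O(X)`, `μ_O X (M) (φ) = M (π_φ)`. -/
def muO (X : Type*) [TopologicalSpace X] (M : ↥(OF (↥(OF X)))) : ↥(OF X) := by
  refine ⟨fun φ => M.1 (piO X φ), ?_, ?_, ?_⟩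
  · have h1 : piO X (1 : C(X, ℝ)) = 1 := by
      ext ν; exact ν.2.1
    show M.1 (piO X 1) = 1
    rw [h1]; exact M.2.1
  · intro φ c
    have h : piO X (φ + ContinuousMap.const X c)
        = piO X φ + ContinuousMap.const _ c := by
      ext ν; exact ν.2.2.1 φ c
    show M.1 (piO X (φ + ContinuousMap.const X c)) = M.1 (piO X φ) + c
    rw [h]; exact M.2.2.1 _ c
  · intro φ ψ h
    exact M.2.2.2 _ _ (fun ν => ν.2.2.2 φ ψ h)

/-! Fix a metric on `X`. The sup-convolution `φ_K x = ⨆ y, φ y - K * dist x y` is a `K`-Lipschitz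
majorant of `φ`, and precomposition with `φ ↦ φ_K` maps `O(X)` into itself and tends uniformly to
the identity as `K → ∞`. By uniform continuity of `Φ` on the compact space `O(X)`, `φ_K - ε` is
again a minorant of `Φ` whenever `φ` is, once `K` is large. A minorant lying below `-‖Φ‖`
everywhere is dominated by that constant, so the supremum over all minorants is uniformly within
`ε` of the supremum over the bounded `K`-Lipschitz minorants. These form a compact set by
Arzelà–Ascoli, and a supremum of a jointly continuous function over a compact set is continuous.
The infimum over majorants is reduced to this case by the involution `ν ↦ (φ ↦ -ν (-φ))` of
`O(X)`, applied at both levels. -/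

open Set Filter Topology Metric NNReal

theorem dist_csSup_image_le {α : Type*} {f : α → ℝ} {S L : Set α} {ε : ℝ} (hLS : L ⊆ S)
    (hL : L.Nonempty) (hS : BddAbove (f '' S)) (h : ∀ a ∈ S, ∃ b ∈ L, f a ≤ f b + ε) :
    dist (sSup (f '' S)) (sSup (f '' L)) ≤ ε := by
  have hLS' : f '' L ⊆ f '' S := image_mono hLS
  have hle : sSup (f '' L) ≤ sSup (f '' S) := csSup_le_csSup hS (hL.image f) hLS'
  have hge : sSup (f '' S) ≤ sSup (f '' L) + ε := by
    refine csSup_le ((hL.mono hLS).image f) (forall_mem_image.2 fun a ha => ?_)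
    obtain ⟨b, hb, hab⟩ := h a ha
    linarith [le_csSup (hS.mono hLS') (mem_image_of_mem f hb)]
  rw [Real.dist_eq, abs_of_nonneg (sub_nonneg.2 hle)]
  linarith

namespace OF

section Basic

variable {Y : Type*} [TopologicalSpace Y]

theorem apply_const (ν : OF Y) (c : ℝ) : ν.1 (ContinuousMap.const Y c) = c := by
  have h := ν.2.2.1 1 (c - 1)
  rwa [show (1 : C(Y, ℝ)) + ContinuousMap.const Y (c - 1) = ContinuousMap.const Y c by ext; simp,
    ν.2.1, add_sub_cancel] at h

theorem apply_le_apply_add {ν : OF Y} {φ ψ : C(Y, ℝ)} {c : ℝ}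
    (h : φ ≤ ψ + ContinuousMap.const Y c) : ν.1 φ ≤ ν.1 ψ + c :=
  (ν.2.2.2 _ _ h).trans_eq (ν.2.2.1 ψ c)

theorem piO_le_piO_add {φ ψ : C(Y, ℝ)} {c : ℝ} (h : φ ≤ ψ + ContinuousMap.const Y c) :
    piO Y φ ≤ piO Y ψ + ContinuousMap.const _ c :=
  fun _ => apply_le_apply_add h

def dirac (y : Y) : OF Y :=
  ⟨fun φ => φ y, rfl, fun _ _ => rfl, fun _ _ h => h y⟩

def minorants (Φ : C(OF Y, ℝ)) : Set C(Y, ℝ) := {φ | piO Y φ ≤ Φ}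

end Basic

section Compact

variable {Y : Type*} [TopologicalSpace Y]

theorem isClosed : IsClosed (OF Y) := by
  simp only [OF, ofPred_and, ofPred_forall]
  refine (isClosed_eq (continuous_apply 1) continuous_const).inter (.inter ?_ ?_)
  · exact isClosed_iInter fun φ => isClosed_iInter fun c =>
      isClosed_eq (continuous_apply _) ((continuous_apply φ).add continuous_const)
  · exact isClosed_iInter fun φ => isClosed_iInter fun ψ => isClosed_iInter fun _ =>
      isClosed_le (continuous_apply φ) (continuous_apply ψ)

variable [CompactSpace Y]

theorem lipschitzWith_one (ν : OF Y) : LipschitzWith 1 ν.1 :=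
  LipschitzWith.of_le_add fun φ ψ => apply_le_apply_add fun y =>
    show φ y ≤ ψ y + dist φ ψ by
      linarith [(abs_sub_le_iff.1 (ContinuousMap.dist_apply_le_dist (f := φ) (g := ψ) y)).1]

theorem isCompact : IsCompact (OF Y) := by
  refine (isCompact_univ_pi fun φ : C(Y, ℝ) => isCompact_closedBall 0 ‖φ‖).of_isClosed_subset
    isClosed fun ν hν φ _ => ?_
  have h0 : ν 0 = 0 := by simpa using apply_const ⟨ν, hν⟩ 0
  simpa [h0] using (lipschitzWith_one ⟨ν, hν⟩).dist_le_mul φ 0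

instance : CompactSpace (OF Y) := isCompact_iff_compactSpace.1 isCompact

theorem lipschitzWith_piO : LipschitzWith 1 (piO Y) :=
  LipschitzWith.of_dist_le_mul fun φ ψ => by
    rw [NNReal.coe_one, one_mul]
    exact (ContinuousMap.dist_le dist_nonneg).2 fun ν =>
      show dist (ν.1 φ) (ν.1 ψ) ≤ _ by simpa using (lipschitzWith_one ν).dist_le_mul φ ψ

theorem continuous_apply_piO :
    Continuous fun p : OF (OF Y) × C(Y, ℝ) => p.1.1 (piO Y p.2) :=
  continuous_prod_of_continuous_lipschitzWith' _ (1 * 1)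
    (fun M => (lipschitzWith_one M).comp lipschitzWith_piO)
    (fun φ => (continuous_apply (piO Y φ)).comp continuous_subtype_val)

theorem isClosed_minorants (Φ : C(OF Y, ℝ)) : IsClosed (minorants Φ) := by
  simp only [minorants, ContinuousMap.le_def, ofPred_forall]
  exact isClosed_iInter fun ν => isClosed_le (lipschitzWith_one ν).continuous continuous_const

theorem const_mem_minorants (Φ : C(OF Y, ℝ)) :
    ContinuousMap.const Y (-‖Φ‖) ∈ minorants Φ := fun ν => by
  show ν.1 _ ≤ Φ ν
  rw [apply_const]
  exact neg_le_of_abs_le (Φ.norm_coe_le_norm ν)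

theorem le_norm_of_mem_minorants {Φ : C(OF Y, ℝ)} {φ : C(Y, ℝ)} (hφ : φ ∈ minorants Φ) (y : Y) :
    φ y ≤ ‖Φ‖ :=
  (hφ (dirac y)).trans ((Real.le_norm_self _).trans (Φ.norm_coe_le_norm _))

end Compact

section SupConvolution

variable {X : Type*} [PseudoMetricSpace X] [CompactSpace X]

theorem bddAbove_range_sub_mul_dist (φ : C(X, ℝ)) (K : ℝ≥0) (x : X) :
    BddAbove (range fun y => φ y - K * dist x y) := by
  obtain ⟨C, hC⟩ := (isCompact_range φ.continuous).bddAbove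
  exact ⟨C, forall_mem_range.2 fun y =>
    (sub_le_self _ (by positivity)).trans (hC (mem_range_self y))⟩

theorem iSup_sub_mul_dist_le (φ : C(X, ℝ)) (K : ℝ≥0) (x x' : X) :
    ⨆ y, φ y - K * dist x y ≤ (⨆ y, φ y - K * dist x' y) + K * dist x x' := by
  have : Nonempty X := ⟨x⟩
  refine ciSup_le fun y => ?_
  have := le_ciSup (bddAbove_range_sub_mul_dist φ K x') y
  nlinarith [dist_triangle_left x' y x, K.coe_nonneg]

noncomputable def supConv (K : ℝ≥0) (φ : C(X, ℝ)) : C(X, ℝ) where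
  toFun x := ⨆ y, φ y - K * dist x y
  continuous_toFun := (LipschitzWith.of_le_add_mul K (iSup_sub_mul_dist_le φ K)).continuous

variable (K : ℝ≥0) (φ : C(X, ℝ))

theorem lipschitzWith_supConv : LipschitzWith K (supConv K φ) :=
  LipschitzWith.of_le_add_mul K (iSup_sub_mul_dist_le φ K)

theorem sub_mul_dist_le_supConv (x y : X) : φ y - K * dist x y ≤ supConv K φ x :=
  le_ciSup (bddAbove_range_sub_mul_dist φ K x) y

theorem le_supConv (x : X) : φ x ≤ supConv K φ x := by
  simpa using sub_mul_dist_le_supConv K φ x x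

theorem supConv_le {x : X} {r : ℝ} (h : ∀ y, φ y - K * dist x y ≤ r) : supConv K φ x ≤ r :=
  have : Nonempty X := ⟨x⟩
  ciSup_le h

theorem monotone_supConv : Monotone (supConv (X := X) K) := fun φ ψ h x =>
  supConv_le K φ fun y => (sub_le_sub_right (h y) _).trans (sub_mul_dist_le_supConv K ψ x y)

theorem supConv_add_const (c : ℝ) :
    supConv K (φ + ContinuousMap.const X c) = supConv K φ + ContinuousMap.const X c := by
  ext x
  have : Nonempty X := ⟨x⟩
  have := (OrderIso.addRight c).map_ciSup (bddAbove_range_sub_mul_dist φ K x)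
  simp only [OrderIso.addRight_apply] at this
  simp only [supConv, ContinuousMap.coe_mk, ContinuousMap.add_apply, ContinuousMap.const_apply,
    this, add_sub_right_comm]

theorem supConv_one : supConv K (1 : C(X, ℝ)) = 1 := by
  ext x
  refine le_antisymm (supConv_le K 1 fun y => ?_) (le_supConv K 1 x)
  have : 0 ≤ (K : ℝ) * dist x y := by positivity
  simpa using this

theorem tendsto_supConv : Tendsto (fun K => supConv K φ) atTop (𝓝 φ) := by
  refine Metric.tendsto_atTop.2 fun ε hε => ?_
  obtain ⟨δ, hδ, hφδ⟩ := Metric.uniformContinuous_iff.1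
    (CompactSpace.uniformContinuous_of_continuous φ.continuous) (ε / 2) (half_pos hε)
  refine ⟨(2 * ‖φ‖ / δ).toNNReal, fun K hK => ?_⟩
  have hKδ : 2 * ‖φ‖ ≤ K * δ := by
    rw [← div_le_iff₀ hδ]
    exact Real.toNNReal_le_iff_le_coe.1 hK
  refine ((ContinuousMap.dist_le (half_pos hε).le).2 fun x => ?_).trans_lt (half_lt_self hε)
  rw [Real.dist_eq, abs_of_nonneg (sub_nonneg.2 (le_supConv K φ x)), sub_le_iff_le_add']
  refine supConv_le K φ fun y => ?_
  rcases lt_or_ge (dist x y) δ with hxy | hxy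
  · have := (abs_sub_lt_iff.1 (hφδ hxy)).2
    have : 0 ≤ (K : ℝ) * dist x y := by positivity
    linarith
  · have hy := (abs_le.1 ((Real.norm_eq_abs _).symm.trans_le (φ.norm_coe_le_norm y))).2
    have hx := (abs_le.1 ((Real.norm_eq_abs _).symm.trans_le (φ.norm_coe_le_norm x))).1
    nlinarith [mul_le_mul_of_nonneg_left hxy K.coe_nonneg]

end SupConvolution

section Regularization

variable {X : Type*} [PseudoMetricSpace X] [CompactSpace X]

noncomputable def regularize (K : ℝ≥0) (ν : OF X) : OF X :=
  ⟨fun φ => ν.1 (supConv K φ), by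
    refine ⟨?_, fun φ c => ?_, fun φ ψ h => ν.2.2.2 _ _ (monotone_supConv K h)⟩
    · simp only [supConv_one, ν.2.1]
    · simp only [supConv_add_const, ν.2.2.1]⟩

theorem tendstoUniformly_regularize :
    TendstoUniformly (fun K => regularize (X := X) K) id atTop := by
  rw [tendstoUniformly_iff_tendsto, uniformity_subtype, tendsto_comap_iff, Pi.uniformity,
    tendsto_iInf]
  intro φ
  rw [tendsto_comap_iff]
  refine tendstoUniformly_iff_tendsto.1
    (?_ : TendstoUniformly (fun K (ν : OF X) => ν.1 (supConv K φ)) (fun ν => ν.1 φ) atTop)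
  refine Metric.tendstoUniformly_iff.2 fun ε hε => ?_
  filter_upwards [Metric.tendsto_nhds.1 (tendsto_supConv φ) ε hε] with K hK ν
  calc dist (ν.1 φ) (ν.1 (supConv K φ)) ≤ dist φ (supConv K φ) := by
        simpa using (lipschitzWith_one ν).dist_le_mul φ (supConv K φ)
    _ < ε := by rwa [dist_comm]

theorem eventually_supConv_add_const_mem_minorants (Φ : C(OF X, ℝ)) {ε : ℝ} (hε : 0 < ε) :
    ∀ᶠ K in atTop, ∀ φ ∈ minorants Φ, supConv K φ + ContinuousMap.const X (-ε) ∈ minorants Φ := by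
  have hΦ := (CompactSpace.uniformContinuous_of_continuous Φ.continuous).comp_tendstoUniformly
    tendstoUniformly_regularize
  filter_upwards [Metric.tendstoUniformly_iff.1 hΦ ε hε] with K hK φ hφ ν
  have hν : ν.1 (supConv K φ) ≤ Φ (regularize K ν) := hφ (regularize K ν)
  show ν.1 _ ≤ Φ ν
  have hclose : dist (Φ ν) (Φ (regularize K ν)) < ε := hK ν
  rw [ν.2.2.1]
  linarith [(abs_sub_lt_iff.1 (Real.dist_eq _ _ ▸ hclose)).2]

end Regularization

section Approximation

variable {X : Type*} [PseudoMetricSpace X]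

def boundedLipschitz (K : ℝ≥0) (a b : ℝ) : Set C(X, ℝ) :=
  {f | LipschitzWith K f ∧ ∀ x, f x ∈ Icc a b}

theorem isCompact_boundedLipschitz (K : ℝ≥0) (a b : ℝ) :
    IsCompact (boundedLipschitz (X := X) K a b) := by
  refine ArzelaAscoli.isCompact_of_equicontinuous _ ?_
    (LipschitzWith.uniformEquicontinuous _ K fun f => f.2.1).equicontinuous
  have himage : ContinuousMap.toFun '' boundedLipschitz K a b =
      {f : X → ℝ | LipschitzWith K f} ∩ univ.pi fun _ => Icc a b := by
    ext f
    refine ⟨?_, fun hf => ⟨⟨f, hf.1.continuous⟩, ⟨hf.1, fun x => hf.2 x trivial⟩, rfl⟩⟩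
    rintro ⟨f, ⟨hlip, hmem⟩, rfl⟩
    exact ⟨hlip, fun x _ => hmem x⟩
  rw [himage]
  exact (isCompact_univ_pi fun _ => isCompact_Icc).inter_left
    (isClosed_setOfPred_lipschitzWith K)

variable [CompactSpace X]

theorem exists_le_add_const_mem_boundedLipschitz (Φ : C(OF X, ℝ)) {ε : ℝ} (hε : 0 < ε) :
    ∃ (K : ℝ≥0) (a : ℝ), ∀ φ ∈ minorants Φ, ∃ ψ ∈ minorants Φ ∩ boundedLipschitz K a ‖Φ‖,
      φ ≤ ψ + ContinuousMap.const X ε := by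
  obtain ⟨K, hK⟩ := (eventually_supConv_add_const_mem_minorants Φ hε).exists
  refine ⟨K, -‖Φ‖ - K * diam (univ : Set X) - ε, fun φ hφ => ?_⟩
  by_cases hlarge : ∃ x₀, -‖Φ‖ ≤ φ x₀
  · obtain ⟨x₀, hx₀⟩ := hlarge
    have hψ := hK φ hφ
    refine ⟨_, ⟨hψ, ?_, fun x => ⟨?_, le_norm_of_mem_minorants hψ x⟩⟩, fun x => ?_⟩
    · rw [← supConv_add_const]
      exact lipschitzWith_supConv K _
    · have hdist := dist_le_diam_of_mem isCompact_univ.isBounded (mem_univ x) (mem_univ x₀)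
      have := sub_mul_dist_le_supConv K φ x x₀
      simp only [ContinuousMap.add_apply, ContinuousMap.const_apply]
      nlinarith [mul_le_mul_of_nonneg_left hdist K.coe_nonneg]
    · show φ x ≤ supConv K φ x + -ε + ε
      linarith [le_supConv K φ x]
  · simp only [not_exists, not_le] at hlarge
    refine ⟨_, ⟨const_mem_minorants Φ, LipschitzWith.const' _, fun x => ⟨?_, ?_⟩⟩, fun x => ?_⟩
    · simp only [ContinuousMap.const_apply]
      nlinarith [mul_nonneg K.coe_nonneg (diam_nonneg (s := (univ : Set X)))]
    · simp only [ContinuousMap.const_apply]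
      linarith [norm_nonneg Φ]
    · show φ x ≤ -‖Φ‖ + ε
      linarith [hlarge x]

end Approximation

theorem continuous_sSup_minorants {X : Type*} [PseudoMetricSpace X] [CompactSpace X]
    (Φ : C(OF X, ℝ)) :
    Continuous fun M : OF (OF X) => sSup ((fun φ => M.1 (piO X φ)) '' minorants Φ) := by
  refine continuous_of_uniform_approx_of_continuous fun u hu => ?_
  obtain ⟨ε, hε, hεu⟩ := mem_uniformity_dist.1 hu
  obtain ⟨K, a, hdom⟩ := exists_le_add_const_mem_boundedLipschitz Φ (half_pos hε)
  obtain ⟨ψ₀, hψ₀, -⟩ := hdom _ (const_mem_minorants Φ)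
  refine ⟨fun M => sSup ((fun ψ => M.1 (piO X ψ)) '' (minorants Φ ∩ boundedLipschitz K a ‖Φ‖)),
    ((isCompact_boundedLipschitz K a ‖Φ‖).inter_left (isClosed_minorants Φ)).continuous_sSup
      continuous_apply_piO, fun M => hεu ?_⟩
  refine (dist_csSup_image_le inter_subset_left ⟨ψ₀, hψ₀⟩ ?_ fun φ hφ => ?_).trans_lt
    (half_lt_self hε)
  · exact ⟨M.1 Φ, forall_mem_image.2 fun φ hφ => M.2.2.2 _ _ hφ⟩
  · obtain ⟨ψ, hψ, hφψ⟩ := hdom φ hφ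
    exact ⟨ψ, hψ, apply_le_apply_add (piO_le_piO_add hφψ)⟩

section Duality

variable {Y Z : Type*} [TopologicalSpace Y] [TopologicalSpace Z]

def dual (ν : OF Y) : OF Y :=
  ⟨fun φ => -ν.1 (-φ), by
    refine ⟨?_, fun φ c => ?_, fun φ ψ h => neg_le_neg (ν.2.2.2 _ _ (neg_le_neg h))⟩
    · show -ν.1 (ContinuousMap.const Y (-1)) = 1
      rw [apply_const, neg_neg]
    · show -ν.1 (-(φ + ContinuousMap.const Y c)) = -ν.1 (-φ) + c
      rw [neg_add, show -ContinuousMap.const Y c = ContinuousMap.const Y (-c) from rfl, ν.2.2.1]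
      ring⟩

theorem continuous_dual : Continuous (dual (Y := Y)) :=
  (continuous_pi fun φ => ((continuous_apply (-φ)).comp continuous_subtype_val).neg).subtype_mk _

theorem dual_dual (ν : OF Y) : dual (dual ν) = ν :=
  Subtype.ext <| funext fun φ => by simp [dual]

def dualContinuousMap : C(OF Y, OF Y) := ⟨dual, continuous_dual⟩

def map (f : C(Y, Z)) (ν : OF Y) : OF Z :=
  ⟨fun g => ν.1 (g.comp f), by
    refine ⟨ν.2.1, fun g c => ?_, fun g g' h => ν.2.2.2 _ _ fun y => h (f y)⟩
    simp only [ContinuousMap.add_comp, ContinuousMap.const_comp, ν.2.2.1]⟩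

theorem continuous_map (f : C(Y, Z)) : Continuous (map f) :=
  (continuous_pi fun g => (continuous_apply (g.comp f)).comp continuous_subtype_val).subtype_mk _

theorem dual_map_dual_apply_piO (M : OF (OF Y)) (ψ : C(Y, ℝ)) :
    (dual (map dualContinuousMap M)).1 (piO Y ψ) = -M.1 (piO Y (-ψ)) := by
  have h : (-piO Y ψ).comp dualContinuousMap = piO Y (-ψ) := by
    ext ν
    simp [dualContinuousMap, dual, piO]
  show -M.1 ((-piO Y ψ).comp dualContinuousMap) = _
  rw [h]

theorem mem_minorants_neg_comp_dual_iff (Φ : C(OF Y, ℝ)) (ψ : C(Y, ℝ)) :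
    ψ ∈ minorants (-Φ.comp dualContinuousMap) ↔ Φ ≤ piO Y (-ψ) := by
  refine ⟨fun h ν => ?_, fun h ν => ?_⟩
  · have h' : -ν.1 (-ψ) ≤ -Φ (dual (dual ν)) := h (dual ν)
    rw [dual_dual] at h'
    exact neg_le_neg_iff.1 h'
  · have h' : Φ (dual ν) ≤ -ν.1 (-(-ψ)) := h (dual ν)
    rw [neg_neg] at h'
    exact le_neg_of_le_neg h'

theorem sInf_majorants_eq (Φ : C(OF Y, ℝ)) (M : OF (OF Y)) :
    sInf ((fun φ => M.1 (piO Y φ)) '' {φ | Φ ≤ piO Y φ}) =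
      -sSup ((fun ψ => (dual (map dualContinuousMap M)).1 (piO Y ψ)) ''
        minorants (-Φ.comp dualContinuousMap)) := by
  rw [Real.sInf_def]
  congr 2
  ext r
  simp only [Set.mem_neg, mem_image, mem_minorants_neg_comp_dual_iff, dual_map_dual_apply_piO,
    mem_ofPred_eq]
  constructor
  · rintro ⟨φ, hφ, hr⟩
    exact ⟨-φ, by rwa [neg_neg], by rw [neg_neg, hr, neg_neg]⟩
  · rintro ⟨ψ, hψ, hr⟩
    exact ⟨-ψ, hψ, by linarith⟩

end Duality

theorem continuous_sInf_majorants {X : Type*} [PseudoMetricSpace X] [CompactSpace X]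
    (Φ : C(OF X, ℝ)) :
    Continuous fun M : OF (OF X) => sInf ((fun φ => M.1 (piO X φ)) '' {φ | Φ ≤ piO X φ}) := by
  simp only [sInf_majorants_eq]
  exact ((continuous_sSup_minorants _).comp
    (continuous_dual.comp (continuous_map dualContinuousMap))).neg

end OF

theorem sup_inf_approx_continuous_general (X : Type*) [TopologicalSpace X] [CompactSpace X]
    [TopologicalSpace.MetrizableSpace X] (Φ : C(↥(OF X), ℝ)) :
    Continuous (fun M : ↥(OF (↥(OF X))) =>
      sSup ((fun φ : C(X, ℝ) => M.1 (piO X φ)) '' {φ : C(X, ℝ) | piO X φ ≤ Φ})) ∧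
    Continuous (fun M : ↥(OF (↥(OF X))) =>
      sInf ((fun φ : C(X, ℝ) => M.1 (piO X φ)) '' {φ : C(X, ℝ) | Φ ≤ piO X φ})) := by
  let := TopologicalSpace.metrizableSpaceMetric X
  exact ⟨OF.continuous_sSup_minorants Φ, OF.continuous_sInf_majorants Φ⟩

/-- For a metrizable compact Hausdorff `X` and `Φ ∈ C(O(X))`, the maps
`M ↦ sup{M(π_φ) : φ ∈ C(X), π_φ ≤ Φ}` and `M ↦ inf{M(π_φ) : φ ∈ C(X), π_φ ≥ Φ}`
are continuous on `O(O(X))`. -/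
theorem sup_inf_approx_continuous (X : Type*) [TopologicalSpace X] [CompactSpace X]
    [T2Space X] [TopologicalSpace.MetrizableSpace X] (Φ : C(↥(OF X), ℝ)) :
    Continuous (fun M : ↥(OF (↥(OF X))) =>
      sSup ((fun φ : C(X, ℝ) => M.1 (piO X φ)) '' {φ : C(X, ℝ) | piO X φ ≤ Φ})) ∧
    Continuous (fun M : ↥(OF (↥(OF X))) =>
      sInf ((fun φ : C(X, ℝ) => M.1 (piO X φ)) '' {φ : C(X, ℝ) | Φ ≤ piO X φ})) :=
  sup_inf_approx_continuous_general X Φ
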